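/- Let k ≥ 1 be an integer, λ > 0, K > 0, θ ∈ ℝ, and let b : [0,∞) → [0,∞) be continuous with b_* ≤ b(t)² ≤ b^* for all t ≥ 0, where either (θ > k/2 and b^* ≥ b_* > 0) or (θ = k/2 and b^* ≥ b_* > 2λ). Set β(t,x) := b(t)(1+x)^θ. Then for every M₂ > 0 there is M₁ > 0 such that for all t ≥ 0 and all real x, y with 0 < x ≤ Ky one has (2λ x^k y² + β(t,x)² y²)/(1+y²) − 2β(t,x)² y⁴/(1+y²)² ≤ M₁ − M₂ · 2β(t,x)² y⁴ / ((1+y²)²(1 + log(1+y²))). -/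

import Mathlib

open MeasureTheory Filter Set
open scoped Topology NNReal ENNReal ComplexConjugate

noncomputable section

/-- The (non-normalized) Fourier integral `ĵ(ξ) = ∫ e^{-i x ξ} φ(x) dx`. -/
def nFT (φ : ℝ → ℂ) (ξ : ℝ) : ℂ :=
  ∫ x : ℝ, Complex.exp (-(Complex.I * ξ * x)) * φ x

/-- The unitary Fourier transform `(2π)^{-1/2} ∫ e^{-i x ξ} φ(x) dx`. -/
def uFT (φ : ℝ → ℂ) (ξ : ℝ) : ℂ :=
  (Real.sqrt (2 * Real.pi) : ℂ)⁻¹ * nFT φ ξ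

/-- `g` is (a representative of) the unitary Fourier transform of the real-valued
function `f`, in the sense of tempered distributions. -/
def HasFT (f : ℝ → ℝ) (g : ℝ → ℂ) : Prop :=
  ∀ φ : SchwartzMap ℝ ℂ, ∫ ξ : ℝ, g ξ * φ ξ = ∫ x : ℝ, (f x : ℂ) * uFT (⇑φ) x

/-- A choice of a Fourier transform representative for `f` (junk value `0` if none exists). -/
def ftOf (f : ℝ → ℝ) : ℝ → ℂ := by
  classical exact if h : ∃ g : ℝ → ℂ, HasFT f g then h.choose else 0

/-- The `H^s(ℝ)` norm: `‖f‖_{H^s}² = ∫ (1+ξ²)^s |f̂(ξ)|² dξ`. -/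
def hsNorm (s : ℝ) (f : ℝ → ℝ) : ℝ :=
  (∫ ξ : ℝ, (1 + ξ ^ 2) ^ s * ‖ftOf f ξ‖ ^ 2) ^ (1 / 2 : ℝ)

/-- Membership in the Sobolev space `H^s(ℝ)`. -/
def MemHs (s : ℝ) (f : ℝ → ℝ) : Prop :=
  (∃ g : ℝ → ℂ, HasFT f g) ∧
    Integrable (fun ξ : ℝ => (1 + ξ ^ 2) ^ s * ‖ftOf f ξ‖ ^ 2)

/-- The `L²(ℝ)` norm. -/
def l2Norm (f : ℝ → ℝ) : ℝ := (∫ x : ℝ, f x ^ 2) ^ (1 / 2 : ℝ)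

/-- The `L^∞(ℝ)` norm (essential supremum). -/
def lInfNorm (f : ℝ → ℝ) : ℝ := (eLpNorm f ⊤ volume).toReal

/-- The `W^{1,∞}(ℝ)` norm, `‖f‖_{L^∞} + ‖∂ₓ f‖_{L^∞}`. -/
def w1InfNorm (f : ℝ → ℝ) : ℝ := lInfNorm f + lInfNorm (deriv f)

/-- `(1-∂ₓ²)⁻¹ f = (1/2) e^{-|·|} ⋆ f`. -/
def helmInv (f : ℝ → ℝ) : ℝ → ℝ :=
  fun x => (1 / 2) * ∫ y : ℝ, Real.exp (-|x - y|) * f y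

/-- `F₁(u) = (1-∂ₓ²)⁻¹ ∂ₓ (u^{k+1})`. -/
def F1 (k : ℕ) (u : ℝ → ℝ) : ℝ → ℝ :=
  helmInv (deriv fun x => u x ^ (k + 1))

/-- `F₂(u) = ((2k-1)/2) (1-∂ₓ²)⁻¹ ∂ₓ (u^{k-1} (∂ₓ u)²)`. -/
def F2 (k : ℕ) (u : ℝ → ℝ) : ℝ → ℝ := fun x =>
  ((2 * (k : ℝ) - 1) / 2) * helmInv (deriv fun y => u y ^ (k - 1) * deriv u y ^ 2) x

/-- `F₃(u) = ((k-1)/2) (1-∂ₓ²)⁻¹ (u^{k-2} (∂ₓ u)³)`; it vanishes when `k = 1`. -/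
def F3 (k : ℕ) (u : ℝ → ℝ) : ℝ → ℝ := fun x =>
  (((k : ℝ) - 1) / 2) * helmInv (fun y => u y ^ (k - 2) * deriv u y ^ 3) x

/-- The nonlocal nonlinearity `F(u) = F₁(u) + F₂(u) + F₃(u)`. -/
def Fnl (k : ℕ) (u : ℝ → ℝ) : ℝ → ℝ := fun x => F1 k u x + F2 k u x + F3 k u x

/-- `j` is an admissible Friedrichs kernel: a Schwartz function whose Fourier transform
`ĵ(ξ) = ∫ e^{-ixξ} j(x) dx` takes real values in `[0,1]` and equals `1` on `[-1,1]`. -/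
def MollKernel (j : SchwartzMap ℝ ℝ) : Prop :=
  (∀ ξ : ℝ, ∃ r : ℝ, 0 ≤ r ∧ r ≤ 1 ∧ nFT (fun x => ((j x : ℝ) : ℂ)) ξ = r) ∧
  (∀ ξ : ℝ, |ξ| ≤ 1 → nFT (fun x => ((j x : ℝ) : ℂ)) ξ = 1)

/-- The Friedrichs mollifier `J_ε f = j_ε ⋆ f`, where `j_ε = ε⁻¹ j(·/ε)`. -/
def Jmol (j : ℝ → ℝ) (ε : ℝ) (f : ℝ → ℝ) : ℝ → ℝ :=
  fun x => ∫ y : ℝ, ε⁻¹ * j ((x - y) / ε) * f y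

/-- The pairing `(D^s f, D^s g)_{L²} = ∫ (1+ξ²)^s f̂(ξ) conj(ĝ(ξ)) dξ` (via Plancherel). -/
def dsPair (s : ℝ) (f g : ℝ → ℝ) : ℝ :=
  (∫ ξ : ℝ, (((1 + ξ ^ 2) ^ s : ℝ) : ℂ) * ftOf f ξ * conj (ftOf g ξ)).re

/-- `h = D^s f`, where `D^s = (1-∂ₓ²)^{s/2}` is the Fourier multiplier `(1+ξ²)^{s/2}`. -/
def IsDs (s : ℝ) (f h : ℝ → ℝ) : Prop :=
  HasFT h fun ξ => (((1 + ξ ^ 2) ^ (s / 2) : ℝ) : ℂ) * ftOf f ξ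

/-- `h = D^η ∂ₓ f`, the Fourier multiplier `(1+ξ²)^{η/2} (iξ)`. -/
def IsDsDx (η : ℝ) (f h : ℝ → ℝ) : Prop :=
  HasFT h fun ξ => (((1 + ξ ^ 2) ^ (η / 2) : ℝ) : ℂ) * (Complex.I * ξ) * ftOf f ξ

/-- `h = ∂ₓ f`, the Fourier multiplier `iξ`. -/
def IsDx (f h : ℝ → ℝ) : Prop :=
  HasFT h fun ξ => Complex.I * ξ * ftOf f ξ

/-- Continuity in time with values in `H^s`. -/
def HsContinuousOn (s : ℝ) (u : ℝ → ℝ → ℝ) (I : Set ℝ) : Prop :=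
  ∀ t₀ ∈ I, Tendsto (fun t => hsNorm s fun x => u t x - u t₀ x) (𝓝[I] t₀) (𝓝 0)

/-- `v` is the time derivative of `u` in the `H^s`-valued sense. -/
def HsDerivOn (s : ℝ) (u v : ℝ → ℝ → ℝ) (I : Set ℝ) : Prop :=
  ∀ t₀ ∈ I,
    Tendsto (fun t => hsNorm s fun x => (u t x - u t₀ x) / (t - t₀) - v t₀ x)
      (𝓝[I \ {t₀}] t₀) (𝓝 0)

/-- `u` is a solution on `[0,T]` of `∂ₜ u + u^k ∂ₓ u + F(u) = 0` with datum `u₀`: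
a continuous `H^s`-valued map satisfying the corresponding integral equation. -/
def IsSolutionOn (k : ℕ) (s T : ℝ) (u₀ : ℝ → ℝ) (u : ℝ → ℝ → ℝ) : Prop :=
  (∀ t ∈ Icc (0 : ℝ) T, MemHs s (u t)) ∧
  HsContinuousOn s u (Icc 0 T) ∧
  (∀ x : ℝ, u 0 x = u₀ x) ∧
  ∀ t ∈ Icc (0 : ℝ) T, ∀ x : ℝ,
    u t x = u₀ x - ∫ τ in (0 : ℝ)..t, (u τ x ^ k * deriv (u τ) x + Fnl k (u τ) x)

/-!
With `w = y²` and `A = β(t,x)²`, the left-hand side plus the `M₂`-term equals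
`2λ x^k w/(1+w) + A · g(w)`, where `g(w) → -1` as `w → ∞` because the factor
`1 + log(1+w)` makes the `M₂`-term vanish. For large `w` the damping `-c A` with `c < 1`
absorbs the forcing `2λ x^k`: up to an additive constant, `2λ x^k` is at most
`c b_* (1+x)^{2θ}`, with `c = 1/2` when `θ > k/2` and `c = 2λ/b_* < 1` when `θ = k/2`.
For bounded `w`, `x ≤ K y` is bounded too.
-/

-- The factor multiplying `β²` in the inequality (moved to the left), as a function of `w = y²`.
def driftFactor (M w : ℝ) : ℝ :=
  w * (1 - w) / (1 + w) ^ 2 + 2 * M * w ^ 2 / ((1 + w) ^ 2 * (1 + Real.log (1 + w)))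

theorem tendsto_driftFactor_atTop (M : ℝ) : Tendsto (driftFactor M) atTop (𝓝 (-1)) := by
  have hu : Tendsto (fun w : ℝ => (1 + w)⁻¹) atTop (𝓝 0) :=
    tendsto_inv_atTop_zero.comp (tendsto_atTop_add_const_left _ 1 tendsto_id)
  have hlog : Tendsto (fun w : ℝ => (1 + Real.log (1 + w))⁻¹) atTop (𝓝 0) :=
    tendsto_inv_atTop_zero.comp <| tendsto_atTop_add_const_left _ 1 <|
      Real.tendsto_log_atTop.comp (tendsto_atTop_add_const_left _ 1 tendsto_id)
  have hlim : Tendsto (fun w : ℝ => (1 - (1 + w)⁻¹) * (2 * (1 + w)⁻¹ - 1) +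
      2 * M * (1 - (1 + w)⁻¹) ^ 2 * (1 + Real.log (1 + w))⁻¹) atTop (𝓝 (-1)) := by
    convert ((tendsto_const_nhds.sub hu).mul
      ((tendsto_const_nhds.mul hu).sub tendsto_const_nhds)).add
        ((tendsto_const_nhds.mul ((tendsto_const_nhds.sub hu).pow 2)).mul hlog) using 2
    norm_num
  refine hlim.congr' ?_
  filter_upwards [eventually_ge_atTop 0] with w hw
  have hQ : 1 + Real.log (1 + w) ≠ 0 := by
    have := Real.log_nonneg (show (1 : ℝ) ≤ 1 + w by linarith); positivity
  unfold driftFactor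
  field_simp
  ring

theorem driftFactor_le {M w : ℝ} (hM : 0 ≤ M) (hw : 0 ≤ w) : driftFactor M w ≤ 1 + 2 * M := by
  have hP : 0 < (1 + w) ^ 2 := by positivity
  have hQ : 1 ≤ 1 + Real.log (1 + w) := by
    have := Real.log_nonneg (show (1 : ℝ) ≤ 1 + w by linarith); linarith
  have h₁ : w * (1 - w) / (1 + w) ^ 2 ≤ 1 := by
    rw [div_le_one hP]; nlinarith
  have h₂ : w ^ 2 / ((1 + w) ^ 2 * (1 + Real.log (1 + w))) ≤ 1 := by
    rw [div_le_one (by positivity)]; nlinarith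
  have := mul_le_mul_of_nonneg_left h₂ (by positivity : 0 ≤ 2 * M)
  unfold driftFactor
  rw [mul_div_assoc (2 * M)]
  linarith

theorem lhs_add_eq_driftFactor (a A M y : ℝ) :
    (a * y ^ 2 + A * y ^ 2) / (1 + y ^ 2) - 2 * A * y ^ 4 / (1 + y ^ 2) ^ 2 +
        M * (2 * A * y ^ 4 / ((1 + y ^ 2) ^ 2 * (1 + Real.log (1 + y ^ 2)))) =
      a * y ^ 2 / (1 + y ^ 2) + A * driftFactor M (y ^ 2) := by
  have : 1 + y ^ 2 ≠ 0 := by positivity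
  unfold driftFactor
  field_simp
  ring

theorem exists_pow_le_mul_rpow_add (k : ℕ) {p ε : ℝ} (hp : k < p) (hε : 0 < ε) :
    ∃ C, ∀ x : ℝ, 0 ≤ x → x ^ k ≤ ε * (1 + x) ^ p + C := by
  have hdecay : Tendsto (fun x : ℝ => (1 + x) ^ ((k : ℝ) - p)) atTop (𝓝 0) := by
    have := (tendsto_rpow_neg_atTop (sub_pos.2 hp)).comp
      (tendsto_atTop_add_const_left _ 1 tendsto_id)
    simpa only [neg_sub, Function.comp_def, id] using this
  obtain ⟨X, hX⟩ := eventually_atTop.1 (hdecay.eventually (ge_mem_nhds hε))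
  refine ⟨max X 0 ^ k, fun x hx => ?_⟩
  rcases le_total x (max X 0) with hxX | hXx
  · have := pow_le_pow_left₀ hx hxX k
    have : 0 ≤ ε * (1 + x) ^ p := by positivity
    linarith
  · have h1x : 0 < 1 + x := by linarith
    calc x ^ k ≤ (1 + x) ^ k := pow_le_pow_left₀ hx (by linarith) k
      _ = (1 + x) ^ ((k : ℝ) - p) * (1 + x) ^ p := by
        rw [← Real.rpow_add h1x, sub_add_cancel, Real.rpow_natCast]
      _ ≤ ε * (1 + x) ^ p := by
        gcongr; exact hX x ((le_max_left _ _).trans hXx)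
      _ ≤ ε * (1 + x) ^ p + max X 0 ^ k := by
        have : 0 ≤ max X 0 ^ k := by positivity
        linarith

theorem exists_lt_one_pow_le_mul_rpow_add (k : ℕ) {l θ bs : ℝ} (hl : 0 < l)
    (hcase : ((k : ℝ) / 2 < θ ∧ 0 < bs) ∨ (θ = (k : ℝ) / 2 ∧ 2 * l < bs)) :
    ∃ c, 0 ≤ c ∧ c < 1 ∧
      ∃ C, ∀ x : ℝ, 0 ≤ x → 2 * l * x ^ k ≤ c * bs * (1 + x) ^ (2 * θ) + C := by
  rcases hcase with ⟨hθ, hbs⟩ | ⟨rfl, hbs⟩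
  · obtain ⟨C, hC⟩ := exists_pow_le_mul_rpow_add k (p := 2 * θ) (by linarith)
      (by positivity : 0 < bs / (4 * l))
    refine ⟨1 / 2, by norm_num, by norm_num, 2 * l * C, fun x hx => ?_⟩
    have := mul_le_mul_of_nonneg_left (hC x hx) (by positivity : 0 ≤ 2 * l)
    field_simp at this ⊢
    linarith
  · have hbs0 : 0 < bs := by linarith
    refine ⟨2 * l / bs, by positivity, (div_lt_one hbs0).2 hbs, 0, fun x hx => ?_⟩
    rw [mul_div_cancel₀ _ (by norm_num), Real.rpow_natCast, div_mul_cancel₀ _ hbs0.ne',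
      add_zero]
    gcongr
    linarith

theorem mul_sq_div_one_add_sq_le {a : ℝ} (ha : 0 ≤ a) (y : ℝ) :
    a * y ^ 2 / (1 + y ^ 2) ≤ a := by
  rw [div_le_iff₀ (by positivity)]
  nlinarith [sq_nonneg y]

theorem lyapunov_inequality_general (k : ℕ) (l K : ℝ) (hl : 0 < l) (hK : 0 < K)
    (θ bs bS : ℝ) (b : ℝ → ℝ)
    (hbb : ∀ t ∈ Ici (0 : ℝ), bs ≤ b t ^ 2 ∧ b t ^ 2 ≤ bS)
    (hcase : ((k : ℝ) / 2 < θ ∧ 0 < bs ∧ bs ≤ bS) ∨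
      (θ = (k : ℝ) / 2 ∧ 2 * l < bs ∧ bs ≤ bS)) :
    ∀ M₂ : ℝ, 0 < M₂ → ∃ M₁ : ℝ, 0 < M₁ ∧
      ∀ t ∈ Ici (0 : ℝ), ∀ x y : ℝ, 0 < x → x ≤ K * y →
        (2 * l * x ^ k * y ^ 2 + (b t * (1 + x) ^ θ) ^ 2 * y ^ 2) / (1 + y ^ 2) -
            2 * (b t * (1 + x) ^ θ) ^ 2 * y ^ 4 / (1 + y ^ 2) ^ 2 ≤
          M₁ - M₂ * (2 * (b t * (1 + x) ^ θ) ^ 2 * y ^ 4 /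
            ((1 + y ^ 2) ^ 2 * (1 + Real.log (1 + y ^ 2)))) := by
  intro M₂ hM₂
  obtain ⟨c, hc0, hc1, C, hC⟩ := exists_lt_one_pow_le_mul_rpow_add k hl
    (hcase.imp (fun h => ⟨h.1, h.2.1⟩) (fun h => ⟨h.1, h.2.1⟩))
  obtain ⟨W, hW⟩ := eventually_atTop.1
    ((tendsto_driftFactor_atTop M₂).eventually (ge_mem_nhds (neg_lt_neg hc1)))
  have hθ : 0 ≤ 2 * θ := by
    have := k.cast_nonneg (α := ℝ)
    rcases hcase with ⟨hθ, -⟩ | ⟨hθ, -⟩ <;> linarith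
  have hbS : 0 ≤ bS := (sq_nonneg (b 0)).trans (hbb 0 (mem_Ici.2 le_rfl)).2
  set R := K * √W
  refine ⟨max (max C (2 * l * R ^ k + bS * (1 + R) ^ (2 * θ) * (1 + 2 * M₂))) 1, by positivity,
    fun t ht x y hx hxy => ?_⟩
  have hA : (b t * (1 + x) ^ θ) ^ 2 = b t ^ 2 * (1 + x) ^ (2 * θ) := by
    rw [mul_pow, ← Real.rpow_mul_natCast (by linarith), mul_comm θ, Nat.cast_two]
  have hforcing := mul_sq_div_one_add_sq_le (by positivity : 0 ≤ 2 * l * x ^ k) y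
  rw [le_sub_iff_add_le, lhs_add_eq_driftFactor, hA]
  rcases le_or_gt W (y ^ 2) with hyW | hyW
  · have hdamping :=
      mul_le_mul_of_nonneg_left (hbb t ht).1 (by positivity : 0 ≤ c * (1 + x) ^ (2 * θ))
    calc _ ≤ 2 * l * x ^ k + b t ^ 2 * (1 + x) ^ (2 * θ) * -c :=
          add_le_add hforcing (mul_le_mul_of_nonneg_left (hW _ hyW) (by positivity))
      _ ≤ C := by linarith [hC x hx.le]
      _ ≤ _ := (le_max_left _ _).trans (le_max_left _ _)
  · have hxR : x ≤ R := hxy.trans <|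
      mul_le_mul_of_nonneg_left ((le_abs_self y).trans (Real.abs_le_sqrt hyW.le)) hK.le
    have hamplitude : b t ^ 2 * (1 + x) ^ (2 * θ) ≤ bS * (1 + R) ^ (2 * θ) := by
      gcongr
      exact (hbb t ht).2
    calc _ ≤ 2 * l * x ^ k + b t ^ 2 * (1 + x) ^ (2 * θ) * (1 + 2 * M₂) :=
          add_le_add hforcing (mul_le_mul_of_nonneg_left (driftFactor_le hM₂.le (sq_nonneg y))
            (by positivity))
      _ ≤ 2 * l * R ^ k + bS * (1 + R) ^ (2 * θ) * (1 + 2 * M₂) := by gcongr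
      _ ≤ _ := (le_max_right _ _).trans (le_max_left _ _)

/-- Let `k ≥ 1` be an integer, `λ > 0`, `K > 0`, `θ ∈ ℝ`, and let
`b : [0,∞) → [0,∞)` be continuous with `b_* ≤ b(t)² ≤ b^*` for all `t ≥ 0`, where either
(`θ > k/2` and `b^* ≥ b_* > 0`) or (`θ = k/2` and `b^* ≥ b_* > 2λ`).  Set
`β(t,x) = b(t)(1+x)^θ`.  Then for every `M₂ > 0` there is `M₁ > 0` such that for all
`t ≥ 0` and all `0 < x ≤ Ky`,
`(2λ x^k y² + β(t,x)² y²)/(1+y²) − 2β(t,x)² y⁴/(1+y²)²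
  ≤ M₁ − M₂ · 2β(t,x)² y⁴/((1+y²)²(1+log(1+y²)))`. -/
theorem lyapunov_inequality (k : ℕ) (hk : 1 ≤ k) (l K : ℝ) (hl : 0 < l) (hK : 0 < K)
    (θ bs bS : ℝ) (b : ℝ → ℝ) (hb : ContinuousOn b (Ici 0))
    (hbnn : ∀ t ∈ Ici (0 : ℝ), 0 ≤ b t)
    (hbb : ∀ t ∈ Ici (0 : ℝ), bs ≤ b t ^ 2 ∧ b t ^ 2 ≤ bS)
    (hcase : ((k : ℝ) / 2 < θ ∧ 0 < bs ∧ bs ≤ bS) ∨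
      (θ = (k : ℝ) / 2 ∧ 2 * l < bs ∧ bs ≤ bS)) :
    ∀ M₂ : ℝ, 0 < M₂ → ∃ M₁ : ℝ, 0 < M₁ ∧
      ∀ t ∈ Ici (0 : ℝ), ∀ x y : ℝ, 0 < x → x ≤ K * y →
        (2 * l * x ^ k * y ^ 2 + (b t * (1 + x) ^ θ) ^ 2 * y ^ 2) / (1 + y ^ 2) -
            2 * (b t * (1 + x) ^ θ) ^ 2 * y ^ 4 / (1 + y ^ 2) ^ 2 ≤
          M₁ - M₂ * (2 * (b t * (1 + x) ^ θ) ^ 2 * y ^ 4 /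
            ((1 + y ^ 2) ^ 2 * (1 + Real.log (1 + y ^ 2)))) :=
  lyapunov_inequality_general k l K hl hK θ bs bS b hbb hcase

end
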